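/- Let a be a real number with a ≥ 0 (or any complex parameter with all n+a ≠ 0 and well-defined powers). For any composition k = (k_1,...,k_r), complex numbers x_1,...,x_r in the closed unit disk, and integers l ≥ 0, n ≥ 1, Σ_{n ≥ n_1 > ... > n_r > 0} Π_{j=1}^r x_j^{n_j+l+a}/(n_j+l+a)^{k_j} = (-1)^r Σ_{j=0}^r (-1)^j ζ_{n+l}(k_1,...,k_j; x_1,...,x_j; a) · ζ_l^⋆(k_r,...,k_{j+1}; x_r,...,x_{j+1}; a). -/

import Mathlib

/-!
Write `w_c(p) = x^(p+c)/(p+c)^k` (`pmhsWeight c k x p`) for the weight of the innermost letter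
`(k, x)`. Peeling that letter off gives `ζ_n(M·(k,x); c) = Σ_{p ≤ n} w_c(p) ζ_{n-p}(M; p+c)`,
so shifting the parameter by `l` amounts to cutting the range of `p` at `l`:
`ζ_{n+l}(M·(k,x); a) = Σ_{p ≤ l} w_a(p) ζ_{n+l-p}(M; p+a) + ζ_n(M·(k,x); l+a)`.
Expanding the first summand by induction on the length of `M` (applied with shift `p` in place
of `l`), and noting that `Σ_{p ≤ l} w_a(p) ζ^⋆_p(N; a) = ζ^⋆_l((k,x)·N; a)`, the alternating sum
telescopes into the stated identity.
-/

open Finset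

/-- Parametric multiple harmonic sum
`ζ_m(k;x;a) = Σ_{m ≥ n_1 > ... > n_r ≥ 1} Π x_j^{n_j+a}/(n_j+a)^{k_j}` (principal branch powers). -/
noncomputable def pmhs (a : ℂ) : ℕ → List (ℕ × ℂ) → ℂ
  | _, [] => 1
  | n, (k, x) :: rest =>
      ∑ m ∈ Finset.Icc 1 n, x ^ ((m : ℂ) + a) / ((m : ℂ) + a) ^ k * pmhs a (m - 1) rest

/-- Parametric multiple harmonic star sum `ζ_m^⋆(k;x;a)`. -/
noncomputable def pmhss (a : ℂ) : ℕ → List (ℕ × ℂ) → ℂ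
  | _, [] => 1
  | n, (k, x) :: rest =>
      ∑ m ∈ Finset.Icc 1 n, x ^ ((m : ℂ) + a) / ((m : ℂ) + a) ^ k * pmhss a m rest

lemma sum_Icc_one_add {M : Type*} [AddCommMonoid M] (m n : ℕ) (f : ℕ → M) :
    ∑ p ∈ Icc 1 (m + n), f p = ∑ p ∈ Icc 1 m, f p + ∑ q ∈ Icc 1 n, f (m + q) := by
  have hIoc (t : ℕ) : Icc 1 t = Ioc 0 t := Icc_add_one_left_eq_Ioc 0 t
  have hshift : Ioc m (m + n) = (Ioc 0 n).map (addLeftEmbedding m) := by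
    rw [map_add_left_Ioc, add_zero]
  rw [hIoc, hIoc, hIoc, ← sum_Ioc_consecutive f (Nat.zero_le m) (Nat.le_add_right m n), hshift,
    sum_map]
  rfl

lemma sum_Icc_sum_Icc_sub_one {M : Type*} [AddCommMonoid M] (n : ℕ) (f : ℕ → ℕ → M) :
    ∑ m ∈ Icc 1 n, ∑ p ∈ Icc 1 (m - 1), f m p =
      ∑ p ∈ Icc 1 n, ∑ q ∈ Icc 1 (n - p), f (p + q) p := by
  rw [sum_comm' (t' := Icc 1 n) (s' := fun p => Icc (p + 1) n)
    (by intro m p; simp only [mem_Icc]; omega)]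
  refine sum_congr rfl fun p hp => ?_
  rw [← Nat.add_sub_cancel' (mem_Icc.1 hp).2, ← map_add_left_Icc, sum_map,
    Nat.add_sub_cancel_left]
  rfl

noncomputable abbrev pmhsWeight (c : ℂ) (k : ℕ) (x : ℂ) (p : ℕ) : ℂ :=
  x ^ ((p : ℂ) + c) / ((p : ℂ) + c) ^ k

lemma pmhsWeight_add (c : ℂ) (k : ℕ) (x : ℂ) (l q : ℕ) :
    pmhsWeight c k x (l + q) = pmhsWeight ((l : ℂ) + c) k x q := by
  simp only [pmhsWeight, Nat.cast_add, add_comm (l : ℂ), add_assoc]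

@[simp]
lemma pmhs_nil (a : ℂ) (n : ℕ) : pmhs a n [] = 1 := by rw [pmhs]

lemma pmhs_cons (a : ℂ) (n k : ℕ) (x : ℂ) (M : List (ℕ × ℂ)) :
    pmhs a n ((k, x) :: M) = ∑ m ∈ Icc 1 n, pmhsWeight a k x m * pmhs a (m - 1) M := by
  rw [pmhs]

@[simp]
lemma pmhss_nil (a : ℂ) (n : ℕ) : pmhss a n [] = 1 := by rw [pmhss]

lemma pmhss_cons (a : ℂ) (n k : ℕ) (x : ℂ) (M : List (ℕ × ℂ)) :
    pmhss a n ((k, x) :: M) = ∑ m ∈ Icc 1 n, pmhsWeight a k x m * pmhss a m M := by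
  rw [pmhss]

lemma pmhs_append_singleton (k : ℕ) (x : ℂ) (M : List (ℕ × ℂ)) (c : ℂ) (n : ℕ) :
    pmhs c n (M ++ [(k, x)]) =
      ∑ p ∈ Icc 1 n, pmhsWeight c k x p * pmhs ((p : ℂ) + c) (n - p) M := by
  induction M generalizing c n with
  | nil => simp [pmhs_cons]
  | cons e M ih =>
    obtain ⟨k', x'⟩ := e
    simp only [List.cons_append, pmhs_cons, ih, mul_sum]
    rw [sum_Icc_sum_Icc_sub_one]
    refine sum_congr rfl fun p _ => sum_congr rfl fun q _ => ?_
    rw [pmhsWeight_add, show p + q - 1 - p = q - 1 by omega]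
    ring

lemma pmhs_add_append_singleton (k : ℕ) (x : ℂ) (M : List (ℕ × ℂ)) (a : ℂ) (l n : ℕ) :
    pmhs a (l + n) (M ++ [(k, x)]) =
      ∑ p ∈ Icc 1 l, pmhsWeight a k x p * pmhs ((p : ℂ) + a) (l + n - p) M +
        pmhs ((l : ℂ) + a) n (M ++ [(k, x)]) := by
  rw [pmhs_append_singleton, pmhs_append_singleton, sum_Icc_one_add]
  congr 1
  refine sum_congr rfl fun q _ => ?_
  have hparam : ((l + q : ℕ) : ℂ) + a = (q : ℂ) + ((l : ℂ) + a) := by push_cast; ring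
  rw [pmhsWeight_add, Nat.add_sub_add_left, hparam]

theorem sum_neg_one_pow_mul_pmhs_mul_pmhss (a : ℂ) (M : List (ℕ × ℂ)) (l n : ℕ) :
    ∑ j ∈ range (M.length + 1),
        (-1 : ℂ) ^ j * pmhs a (n + l) (M.take j) * pmhss a l ((M.drop j).reverse) =
      (-1 : ℂ) ^ M.length * pmhs ((l : ℂ) + a) n M := by
  induction M using List.reverseRecOn generalizing l n with
  | nil => simp
  | append_singleton M e ih =>
    obtain ⟨k, x⟩ := e
    have hprefix : ∑ j ∈ range (M.length + 1),
          (-1 : ℂ) ^ j * pmhs a (n + l) ((M ++ [(k, x)]).take j) *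
            pmhss a l (((M ++ [(k, x)]).drop j).reverse) =
        (-1 : ℂ) ^ M.length *
          ∑ p ∈ Icc 1 l, pmhsWeight a k x p * pmhs ((p : ℂ) + a) (l + n - p) M := by
      calc _ = ∑ j ∈ range (M.length + 1), ∑ p ∈ Icc 1 l, pmhsWeight a k x p *
              ((-1 : ℂ) ^ j * pmhs a (n + l) (M.take j) * pmhss a p ((M.drop j).reverse)) := by
            refine sum_congr rfl fun j hj => ?_
            have hj : j ≤ M.length := Nat.lt_succ_iff.1 (mem_range.1 hj)
            rw [List.take_append_of_le_length hj, List.drop_append_of_le_length hj,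
              List.reverse_append, List.reverse_singleton, List.singleton_append, pmhss_cons,
              mul_sum]
            exact sum_congr rfl fun p _ => by ring
        _ = _ := by
            rw [sum_comm, mul_sum]
            refine sum_congr rfl fun p hp => ?_
            have hpl := (mem_Icc.1 hp).2
            rw [← mul_sum, show n + l = (l + n - p) + p by omega, ih]
            ring
    rw [sum_range_succ, List.take_length, List.drop_length, List.reverse_nil, pmhss_nil,
      List.length_append, List.length_singleton, hprefix, add_comm n l,
      pmhs_add_append_singleton]
    ring

theorem stmt4_general (a : ℝ) (ks : List ℕ) (xs : List ℂ)
    (hlen : ks.length = xs.length) (l : ℕ) (n : ℕ) :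
    pmhs ((l : ℂ) + (a : ℂ)) n (ks.zip xs) =
      (-1 : ℂ) ^ ks.length * ∑ j ∈ Finset.range (ks.length + 1),
        (-1 : ℂ) ^ j * pmhs (a : ℂ) (n + l) ((ks.take j).zip (xs.take j)) *
          pmhss (a : ℂ) l (((ks.drop j).zip (xs.drop j)).reverse) := by
  have hzip : (ks.zip xs).length = ks.length := by rw [List.length_zip, hlen, min_self]
  have hsq : (-1 : ℂ) ^ ks.length * (-1 : ℂ) ^ ks.length = 1 := by
    rw [← pow_add, Even.neg_one_pow ⟨_, rfl⟩]
  simp only [List.zip_eq_zipWith, ← List.take_zipWith, ← List.drop_zipWith]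
  rw [← List.zip_eq_zipWith, ← hzip, sum_neg_one_pow_mul_pmhs_mul_pmhss, ← mul_assoc, hzip, hsq,
    one_mul]

/-- The shifted parametric strict sum
`Σ_{n ≥ n_1 > ... > n_r > 0} Π x_j^{n_j+l+a}/(n_j+l+a)^{k_j}` is `pmhs (l+a) n`. -/
theorem stmt4 (a : ℝ) (ha : 0 ≤ a) (ks : List ℕ) (xs : List ℂ)
    (hlen : ks.length = xs.length) (hk : ∀ k ∈ ks, 1 ≤ k)
    (hx : ∀ x ∈ xs, ‖x‖ ≤ 1) (l : ℕ) (n : ℕ) (hn : 1 ≤ n) :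
    pmhs ((l : ℂ) + (a : ℂ)) n (ks.zip xs) =
      (-1 : ℂ) ^ ks.length * ∑ j ∈ Finset.range (ks.length + 1),
        (-1 : ℂ) ^ j * pmhs (a : ℂ) (n + l) ((ks.take j).zip (xs.take j)) *
          pmhss (a : ℂ) l (((ks.drop j).zip (xs.drop j)).reverse) :=
  stmt4_general a ks xs hlen l n
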